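/- arXiv:math/0407393 — 3 statements merged into one kernel-verified Lean document; each statement's English description precedes it below -/
import Mathlib

section
/- Let p be an odd prime and n ≥ 1. Let G_n be a cyclic group of order p^n with generator γ, and let ξ_n = Σ_{σ ∈ G_n, σ^p = 1} σ in the group algebra Z_p[G_n]. Then ξ_n = Σ_{a=0}^{p-1} γ^{a·p^{n-1}}, and its image in F_p[G_n] equals (γ - 1)^{p^n - p^{n-1}}. -/
open MonoidAlgebra Finset

/-- `G_n`: cyclic group of order `p^n`. -/
abbrev Gn (p n : ℕ) := Multiplicative (ZMod (p ^ n))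

/-- `Λ_n = ℤ_p[G_n]`. -/
abbrev Lam (p : ℕ) [Fact p.Prime] (n : ℕ) := MonoidAlgebra ℤ_[p] (Gn p n)

/-- `ξ_n`: sum of the elements of the subgroup of order `p`. -/
noncomputable def xi (p : ℕ) [Fact p.Prime] (n : ℕ) : Lam p n :=
  ∑ σ ∈ Finset.univ.filter (fun σ : Gn p n => σ ^ p = 1), MonoidAlgebra.of ℤ_[p] (Gn p n) σ

/-- The natural surjection `G_{n+1} →* G_n`. -/
noncomputable def projHom (p n : ℕ) : Gn p (n+1) →* Gn p n :=
  AddMonoidHom.toMultiplicative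
    (ZMod.castHom (pow_dvd_pow p (Nat.le_succ n)) (ZMod (p^n))).toAddMonoidHom

/-- `π_{n+1/n} : Λ_{n+1} →+* Λ_n`, the induced projection of group algebras. -/
noncomputable def piMap (p : ℕ) [Fact p.Prime] (n : ℕ) : Lam p (n+1) →+* Lam p n :=
  MonoidAlgebra.mapDomainRingHom ℤ_[p] (projHom p n)

/-- `ν_{n/n+1} : Λ_n → Λ_{n+1}`, sending `σ` to the sum of its preimages. -/
noncomputable def nuMap (p : ℕ) [Fact p.Prime] (n : ℕ) (f : Lam p n) : Lam p (n+1) :=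
  ∑ τ : Gn p (n+1), MonoidAlgebra.single τ (f.coeff (projHom p n τ))

/-- Reduction mod `p`: `ℤ_p[G_n] → 𝔽_p[G_n]` (coefficientwise). -/
noncomputable def red (p : ℕ) [Fact p.Prime] (n : ℕ) (f : Lam p n) :
    MonoidAlgebra (ZMod p) (Gn p n) :=
  MonoidAlgebra.ofCoeff (Finsupp.mapRange (PadicInt.toZMod) (map_zero _) f.coeff)

/-- The augmentation ideal `Ĩ_n` of `𝔽_p[G_n]`. -/
noncomputable def augIdeal (p : ℕ) [Fact p.Prime] (n : ℕ) :
    Ideal (MonoidAlgebra (ZMod p) (Gn p n)) :=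
  RingHom.ker ((MonoidAlgebra.lift (ZMod p) (ZMod p) (Gn p n)) 1).toRingHom

/-
The elements of order dividing `p` in the cyclic group `⟨γ⟩` of order `p ^ n` are exactly the
powers of `γ ^ p ^ (n - 1)`, an element of order `p`; this gives the first formula. Modulo `p`
both sides of the second formula are the cyclotomic polynomial `Φ_{p ^ n}` evaluated at `γ`:
`Φ_{p ^ n}(X) = ∑_{a < p} X ^ (a p ^ (n - 1))` over any ring, while in characteristic `p`
`Φ_{p ^ n}(X) = Φ_1(X) ^ (p ^ n - p ^ (n - 1)) = (X - 1) ^ (p ^ n - p ^ (n - 1))`.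
-/

open Polynomial

theorem injOn_pow_range_orderOf {G : Type*} [Monoid G] (δ : G) :
    Set.InjOn (δ ^ ·) (range (orderOf δ)) :=
  fun _ ha _ hb => pow_injOn_Iio_orderOf (by simpa using ha) (by simpa using hb)

section CyclicGroup

variable {G M : Type*} [Group G] [Fintype G] [DecidableEq G] [IsCyclic G]

theorem filter_pow_orderOf_eq_one_eq_image (δ : G) :
    univ.filter (fun σ : G => σ ^ orderOf δ = 1) = (range (orderOf δ)).image (δ ^ ·) := by
  symm
  apply Finset.eq_of_subset_of_card_le
  · intro σ hσ
    obtain ⟨a, -, rfl⟩ := mem_image.1 hσ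
    rw [mem_filter, ← pow_mul, mul_comm, pow_mul, pow_orderOf_eq_one, one_pow]
    exact ⟨mem_univ _, rfl⟩
  · rw [card_image_of_injOn (injOn_pow_range_orderOf δ), card_range]
    exact IsCyclic.card_pow_eq_one_le (orderOf_pos δ)

theorem sum_filter_pow_orderOf_eq_one [AddCommMonoid M] (δ : G) (f : G → M) :
    ∑ σ ∈ univ.filter (fun σ : G => σ ^ orderOf δ = 1), f σ =
      ∑ a ∈ range (orderOf δ), f (δ ^ a) := by
  rw [filter_pow_orderOf_eq_one_eq_image, sum_image (injOn_pow_range_orderOf δ)]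

end CyclicGroup

theorem sum_pow_mul_prime_pow_eq_sub_one_pow {A : Type*} [Ring A] (p : ℕ) [Fact p.Prime]
    [Algebra (ZMod p) A] (x : A) {n : ℕ} (hn : 0 < n) :
    ∑ a ∈ range p, x ^ (a * p ^ (n - 1)) = (x - 1) ^ (p ^ n - p ^ (n - 1)) := by
  obtain ⟨k, rfl⟩ := Nat.exists_eq_add_one.2 hn
  have hcyc : ∑ a ∈ range p, ((X : (ZMod p)[X]) ^ p ^ k) ^ a =
      (X - 1) ^ (p ^ (k + 1) - p ^ k) := by
    rw [← cyclotomic_prime_pow_eq_geom_sum Fact.out, ← mul_one (p ^ (k + 1)),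
      cyclotomic_mul_prime_pow_eq (ZMod p) (Nat.Prime.not_dvd_one Fact.out) k.succ_pos,
      cyclotomic_one, mul_one, Nat.succ_sub_one]
  simpa [map_sum, ← pow_mul, mul_comm] using congrArg (aeval x) hcyc

theorem red_sum_of (p : ℕ) [Fact p.Prime] (n : ℕ) {ι : Type*} (s : Finset ι) (g : ι → Gn p n) :
    red p n (∑ i ∈ s, of ℤ_[p] (Gn p n) (g i)) = ∑ i ∈ s, of (ZMod p) (Gn p n) (g i) := by
  rw [red, MonoidAlgebra.coeff_sum, Finsupp.mapRange_finsetSum (PadicInt.toZMod (p := p)),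
    ofCoeff_sum]
  refine sum_congr rfl fun i _ => ?_
  simp [of_apply]

theorem stmt0_general (p : ℕ) [Fact p.Prime] (n : ℕ) (hn : 1 ≤ n)
    (γ : Gn p n) (hγ : ∀ x : Gn p n, x ∈ Subgroup.zpowers γ) :
    xi p n = ∑ a ∈ Finset.range p, MonoidAlgebra.of ℤ_[p] (Gn p n) (γ ^ (a * p ^ (n-1))) ∧
    red p n (xi p n) =
      (MonoidAlgebra.of (ZMod p) (Gn p n) γ - 1) ^ (p ^ n - p ^ (n-1)) := by
  have hp : p.Prime := Fact.out
  have hord : orderOf γ = p ^ (n - 1) * p := by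
    rw [orderOf_eq_card_of_forall_mem_zpowers hγ, ← pow_succ, Nat.sub_add_cancel hn]
    simp
  have hordδ : orderOf (γ ^ p ^ (n - 1)) = p := by
    rw [orderOf_pow_of_dvd (pow_ne_zero _ hp.ne_zero) (hord ▸ dvd_mul_right _ _), hord,
      Nat.mul_div_cancel_left _ (pow_pos hp.pos _)]
  have hxi : xi p n = ∑ a ∈ range p, of ℤ_[p] (Gn p n) (γ ^ (a * p ^ (n - 1))) := by
    have hsum := sum_filter_pow_orderOf_eq_one (γ ^ p ^ (n - 1)) (of ℤ_[p] (Gn p n))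
    rw [hordδ] at hsum
    rw [xi, hsum]
    simp only [← pow_mul, mul_comm]
  refine ⟨hxi, ?_⟩
  rw [hxi, red_sum_of, ← sum_pow_mul_prime_pow_eq_sub_one_pow p _ (by omega)]
  simp only [map_pow]

/-- If `γ` generates `G_n` (`n ≥ 1`, `p` odd) then
`ξ_n = ∑_{a=0}^{p-1} γ^{a p^{n-1}}` and the image of `ξ_n` in `𝔽_p[G_n]`
is `(γ - 1)^{p^n - p^{n-1}}`. -/
theorem stmt0 (p : ℕ) [Fact p.Prime] (hodd : Odd p) (n : ℕ) (hn : 1 ≤ n)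
    (γ : Gn p n) (hγ : ∀ x : Gn p n, x ∈ Subgroup.zpowers γ) :
    xi p n = ∑ a ∈ Finset.range p, MonoidAlgebra.of ℤ_[p] (Gn p n) (γ ^ (a * p ^ (n-1))) ∧
    red p n (xi p n) =
      (MonoidAlgebra.of (ZMod p) (Gn p n) γ - 1) ^ (p ^ n - p ^ (n-1)) :=
  stmt0_general p n hn γ hγ
end

section
/- Let p be a prime, γ a generator of the cyclic group G_n of order p^n, and χ: G_n → Q̄_p^× a character of exact order p^n. Let f ∈ Λ_n = Z_p[G_n] with λ(f) < p^{n-1}(p-1). Then the p-adic valuation of χ(f) (extending ord_p(p) = 1) equals μ(f) + λ(f)/(p^{n-1}(p-1)). -/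
open MonoidAlgebra Finset

/-!
Write `red f' = t^l u` with `t = γ - 1`, which generates the augmentation ideal of `𝔽_p[G_n]`,
so that `ε(u) ≠ 0`. Lifting `ε(u)` to a unit `a` of `ℤ_p` gives `f' = a (γ - 1)^l + g` with
`red g ∈ Ĩ^{l+1}`. For any such `g`, lift `red g = t^{l+1} U`: then `g - (γ - 1)^{l+1} U` is
divisible by `p`, so `χ(g)` has valuation at least `min(1, (l+1)/φ(p^n))`. Evaluating the
cyclotomic polynomial at `1` gives `p = ∏ (1 - μ)` over the `φ(p^n)` primitive `p^n`-th roots of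
unity, which all have the valuation of `1 - χ(γ)`; so `ord(χ(γ) - 1) = 1/φ(p^n)` and, as
`l < φ(p^n)`, the term `a (χ(γ) - 1)^l` strictly dominates.
-/

namespace AddValuation

section Field

variable {K : Type*} [Field K]

open Classical in
/-- `v` is only constrained on nonzero elements; its value at `0` is replaced by `⊤`. -/
noncomputable def ofNeZero (v : K → ℚ)
    (hv_mul : ∀ x y : K, x ≠ 0 → y ≠ 0 → v (x * y) = v x + v y)
    (hv_add : ∀ x y : K, x ≠ 0 → y ≠ 0 → x + y ≠ 0 → min (v x) (v y) ≤ v (x + y)) :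
    AddValuation K (WithTop ℚ) :=
  AddValuation.of (fun x => if x = 0 then ⊤ else (v x : WithTop ℚ)) (if_pos rfl)
    (by
      have h := hv_mul 1 1 one_ne_zero one_ne_zero
      rw [mul_one, left_eq_add] at h
      simp [h])
    (by
      intro x y
      by_cases hx : x = 0
      · simp [hx]
      by_cases hy : y = 0
      · simp [hy]
      by_cases hxy : x + y = 0
      · simp [hxy]
      simp only [hx, hy, hxy, if_false, ← WithTop.coe_min, WithTop.coe_le_coe]
      exact hv_add x y hx hy hxy)
    (by
      intro x y
      by_cases hx : x = 0
      · simp [hx]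
      by_cases hy : y = 0
      · simp [hy]
      simp [hx, hy, hv_mul x y hx hy])

lemma ofNeZero_apply {v : K → ℚ} {hv_mul hv_add} {x : K} (hx : x ≠ 0) :
    ofNeZero v hv_mul hv_add x = v x := by
  simp [ofNeZero, hx]

variable (w : AddValuation K (WithTop ℚ))

lemma map_prod {ι : Type*} (s : Finset ι) (f : ι → K) :
    w (∏ i ∈ s, f i) = ∑ i ∈ s, w (f i) := by
  classical
  induction s using Finset.induction with
  | empty => simp
  | insert a s ha ih => rw [prod_insert ha, sum_insert ha, w.map_mul, ih]

lemma map_eq_zero_of_pow_eq_one {ζ : K} {N : ℕ} (hN : N ≠ 0) (hζ : ζ ^ N = 1) :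
    w ζ = 0 := by
  have hζ0 : ζ ≠ 0 := by rintro rfl; simp [hN] at hζ
  obtain ⟨q, hq⟩ := WithTop.ne_top_iff_exists.mp (w.ne_top_iff.mpr hζ0)
  have h := w.map_pow ζ N
  rw [hζ, w.map_one, ← hq, ← WithTop.coe_nsmul, ← WithTop.coe_zero, WithTop.coe_inj,
    eq_comm, smul_eq_zero] at h
  rw [← hq, h.resolve_left hN]
  rfl

lemma map_one_sub_le_map_one_sub_pow {ζ : K} {N : ℕ} (hN : N ≠ 0) (hζ : ζ ^ N = 1)
    (i : ℕ) : w (1 - ζ) ≤ w (1 - ζ ^ i) := by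
  have hgeom : 0 ≤ w (∑ j ∈ range i, ζ ^ j) :=
    w.map_le_sum fun j _ => by rw [w.map_pow, w.map_eq_zero_of_pow_eq_one hN hζ, nsmul_zero]
  calc w (1 - ζ) ≤ w (1 - ζ) + w (∑ j ∈ range i, ζ ^ j) := le_add_of_nonneg_right hgeom
    _ = w (1 - ζ ^ i) := by rw [← w.map_mul, mul_neg_geom_sum]

lemma map_one_sub_eq_of_isPrimitiveRoot {ζ μ : K} {N : ℕ} (hN : N ≠ 0)
    (hζ : IsPrimitiveRoot ζ N) (hμ : IsPrimitiveRoot μ N) : w (1 - μ) = w (1 - ζ) := by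
  have : NeZero N := ⟨hN⟩
  obtain ⟨i, -, rfl⟩ := hζ.eq_pow_of_pow_eq_one hμ.pow_eq_one
  obtain ⟨j, -, hj⟩ := hμ.eq_pow_of_pow_eq_one hζ.pow_eq_one
  refine le_antisymm ?_ (w.map_one_sub_le_map_one_sub_pow hN hζ.pow_eq_one i)
  simpa only [hj] using w.map_one_sub_le_map_one_sub_pow hN hμ.pow_eq_one j

lemma map_natCast_eq_totient_nsmul {p n : ℕ} [Fact p.Prime] (hn : n ≠ 0) {ζ : K}
    (hζ : IsPrimitiveRoot ζ (p ^ n)) : w p = Nat.totient (p ^ n) • w (1 - ζ) := by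
  obtain ⟨k, rfl⟩ := Nat.exists_eq_succ_of_ne_zero hn
  have hp : (p : K) = ∏ μ ∈ primitiveRoots (p ^ (k + 1)) K, (1 - μ) := by
    rw [← Polynomial.eval_one_cyclotomic_prime_pow (R := K) k,
      Polynomial.cyclotomic_eq_prod_X_sub_primitiveRoots hζ, Polynomial.eval_prod]
    simp
  have hpk : 0 < p ^ (k + 1) := pow_pos (Fact.out : p.Prime).pos _
  rw [hp, w.map_prod, sum_congr rfl fun μ hμ => w.map_one_sub_eq_of_isPrimitiveRoot hpk.ne' hζ
    ((mem_primitiveRoots hpk).mp hμ), sum_const, hζ.card_primitiveRoots]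

lemma map_one_sub_of_isPrimitiveRoot_prime_pow {p n : ℕ} [Fact p.Prime] (hn : n ≠ 0) {ζ : K}
    (hζ : IsPrimitiveRoot ζ (p ^ n)) (hwp : w p = 1) :
    w (1 - ζ) = (((Nat.totient (p ^ n) : ℚ)⁻¹ : ℚ) : WithTop ℚ) := by
  have hζ1 : 1 - ζ ≠ 0 :=
    sub_ne_zero.mpr (hζ.ne_one (Nat.one_lt_pow hn (Fact.out : p.Prime).one_lt)).symm
  obtain ⟨q, hq⟩ := WithTop.ne_top_iff_exists.mp (w.ne_top_iff.mpr hζ1)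
  have h := w.map_natCast_eq_totient_nsmul hn hζ
  rw [hwp, ← hq, ← WithTop.coe_nsmul, ← WithTop.coe_one, WithTop.coe_inj, nsmul_eq_mul] at h
  rw [← hq, WithTop.coe_inj, eq_inv_of_mul_eq_one_right h.symm]

end Field

variable {R K : Type*} [CommRing R] [Field K] [Algebra R K] (w : AddValuation K (WithTop ℚ))

lemma map_algebraMap_eq_zero_of_isUnit (hw₀ : ∀ c : R, 0 ≤ w (algebraMap R K c)) {c : R}
    (hc : IsUnit c) : w (algebraMap R K c) = 0 := by
  obtain ⟨d, hcd⟩ := hc.exists_right_inv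
  have h : w (algebraMap R K c) + w (algebraMap R K d) = 0 := by
    rw [← w.map_mul, ← RingHom.map_mul, hcd, (algebraMap R K).map_one, w.map_one]
  exact ((add_eq_zero_iff_of_nonneg (hw₀ c) (hw₀ d)).mp h).1

lemma le_map_lift {G : Type*} [Monoid G] {χ : G →* K} (hχ : ∀ σ, 0 ≤ w (χ σ))
    {c : WithTop ℚ} {g : MonoidAlgebra R G} (hg : ∀ σ, c ≤ w (algebraMap R K (g.coeff σ))) :
    c ≤ w (MonoidAlgebra.lift R K G χ g) := by
  rw [MonoidAlgebra.lift_apply]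
  refine w.map_le_sum fun σ _ => ?_
  dsimp only
  rw [Algebra.smul_def, w.map_mul]
  exact le_add_of_le_of_nonneg (hg σ) (hχ σ)

end AddValuation

namespace MonoidAlgebra

variable {R G : Type*} [CommRing R] [CommMonoid G]

lemma of_sub_one_dvd_sub_algebraMap_lift_one {γ : G} (hγ : ∀ x, x ∈ Submonoid.powers γ)
    (g : MonoidAlgebra R G) :
    of R G γ - 1 ∣ g - algebraMap R (MonoidAlgebra R G) (lift R R G 1 g) := by
  induction g using MonoidAlgebra.induction_linear with
  | zero => simp
  | add f g hf hg =>
      rw [map_add, map_add, add_sub_add_comm]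
      exact dvd_add hf hg
  | single a b =>
      obtain ⟨k, rfl⟩ := Submonoid.mem_powers_iff _ _ |>.mp (hγ a)
      have h : single (γ ^ k) b - algebraMap R (MonoidAlgebra R G) b =
          (of R G γ ^ k - 1) * single 1 b := by
        rw [sub_mul, one_mul, ← map_pow, of_apply, single_mul_single, mul_one, one_mul]
        rfl
      rw [lift_single, MonoidHom.one_apply, smul_eq_mul, mul_one, h]
      exact (sub_one_dvd_pow_sub_one _ k).mul_right _

lemma ker_lift_one_eq_span {γ : G} (hγ : ∀ x, x ∈ Submonoid.powers γ) :
    RingHom.ker (lift R R G 1).toRingHom = Ideal.span {of R G γ - 1} := by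
  refine le_antisymm (fun g hg => Ideal.mem_span_singleton.mpr ?_) ?_
  · have hε : lift R R G 1 g = 0 := hg
    simpa [hε] using of_sub_one_dvd_sub_algebraMap_lift_one hγ g
  · rw [Ideal.span_le, Set.singleton_subset_iff]
    simp [RingHom.mem_ker]

end MonoidAlgebra

lemma red_eq_mapRingHom (p : ℕ) [Fact p.Prime] (n : ℕ) (f : Lam p n) :
    red p n f = MonoidAlgebra.mapRingHom (Gn p n) PadicInt.toZMod f := by
  ext σ
  simp [red]

section Iwasawa

variable {p : ℕ} [Fact p.Prime] {n : ℕ}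

lemma augIdeal_eq_span {γ : Gn p n} (hγ : ∀ x, x ∈ Submonoid.powers γ) :
    augIdeal p n = Ideal.span {MonoidAlgebra.of (ZMod p) (Gn p n) γ - 1} :=
  MonoidAlgebra.ker_lift_one_eq_span hγ

variable {K : Type*} [Field K] [Algebra ℤ_[p] K] (w : AddValuation K (WithTop ℚ))

lemma one_le_map_algebraMap_of_toZMod_eq_zero
    (hw₀ : ∀ c : ℤ_[p], 0 ≤ w (algebraMap ℤ_[p] K c)) (hwp : w p = 1) {c : ℤ_[p]}
    (hc : PadicInt.toZMod c = 0) : 1 ≤ w (algebraMap ℤ_[p] K c) := by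
  have hmem : c ∈ Ideal.span {(p : ℤ_[p])} := by
    rw [← PadicInt.maximalIdeal_eq_span_p, ← PadicInt.ker_toZMod]
    exact hc
  obtain ⟨d, rfl⟩ := Ideal.mem_span_singleton.mp hmem
  rw [map_mul, w.map_mul, map_natCast, hwp]
  exact le_add_of_nonneg_right (hw₀ d)

section ofNeZero

variable {v : K → ℚ} {hv_mul : ∀ x y : K, x ≠ 0 → y ≠ 0 → v (x * y) = v x + v y}
  {hv_add : ∀ x y : K, x ≠ 0 → y ≠ 0 → x + y ≠ 0 → min (v x) (v y) ≤ v (x + y)}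

lemma AddValuation.ofNeZero_algebraMap_nonneg
    (hv_coe : ∀ c : ℤ_[p], c ≠ 0 → v (algebraMap ℤ_[p] K c) = (c.valuation : ℚ))
    (c : ℤ_[p]) :
    0 ≤ AddValuation.ofNeZero v hv_mul hv_add (algebraMap ℤ_[p] K c) := by
  by_cases hc : algebraMap ℤ_[p] K c = 0
  · simp [hc]
  · rw [AddValuation.ofNeZero_apply hc, hv_coe c fun h => hc (by simp [h])]
    exact_mod_cast Nat.zero_le _

lemma AddValuation.ofNeZero_natCast_eq_one
    (hv_coe : ∀ c : ℤ_[p], c ≠ 0 → v (algebraMap ℤ_[p] K c) = (c.valuation : ℚ))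
    (hp : (p : K) ≠ 0) :
    AddValuation.ofNeZero v hv_mul hv_add p = 1 := by
  rw [AddValuation.ofNeZero_apply hp, ← map_natCast (algebraMap ℤ_[p] K),
    hv_coe _ (Nat.cast_ne_zero.mpr (Fact.out : p.Prime).ne_zero), PadicInt.valuation_p]
  rfl

end ofNeZero

variable {γ : Gn p n} {χ : Gn p n →* K}

lemma le_map_lift_of_red_mem_augIdeal_pow (hn : n ≠ 0) (hγ : ∀ x, x ∈ Submonoid.powers γ)
    (hχ : IsPrimitiveRoot (χ γ) (p ^ n))
    (hw₀ : ∀ c : ℤ_[p], 0 ≤ w (algebraMap ℤ_[p] K c)) (hwp : w p = 1) {k : ℕ}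
    (hk : k ≤ Nat.totient (p ^ n)) {g : Lam p n}
    (hg : red p n g ∈ augIdeal p n ^ k) :
    ((k * (Nat.totient (p ^ n) : ℚ)⁻¹ : ℚ) : WithTop ℚ) ≤
      w (MonoidAlgebra.lift ℤ_[p] K (Gn p n) χ g) := by
  set ρ := MonoidAlgebra.mapRingHom (Gn p n) (PadicInt.toZMod (p := p))
  set T := MonoidAlgebra.of ℤ_[p] (Gn p n) γ - 1
  set χ' := MonoidAlgebra.lift ℤ_[p] K (Gn p n) χ
  have hρT : ρ T = MonoidAlgebra.of (ZMod p) (Gn p n) γ - 1 := by simp [ρ, T]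
  rw [augIdeal_eq_span hγ, Ideal.span_singleton_pow, Ideal.mem_span_singleton,
    red_eq_mapRingHom, ← hρT, ← map_pow] at hg
  obtain ⟨u, hu⟩ := hg
  obtain ⟨U, rfl⟩ := MonoidAlgebra.map_surjective (PadicInt.toZMod (p := p)).toAddMonoidHom
    (ZMod.ringHom_surjective _) u
  have hχσ : ∀ σ, 0 ≤ w (χ σ) := fun σ => by
    obtain ⟨j, rfl⟩ := (Submonoid.mem_powers_iff _ _).mp (hγ σ)
    rw [map_pow, w.map_pow,
      w.map_eq_zero_of_pow_eq_one (pow_ne_zero _ (Fact.out : p.Prime).ne_zero) hχ.pow_eq_one,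
      nsmul_zero]
  have hρ : ρ (g - T ^ k * U) = 0 := by rw [map_sub, map_mul, sub_eq_zero]; exact hu
  have hrest : 1 ≤ w (χ' (g - T ^ k * U)) := by
    refine w.le_map_lift hχσ fun σ => one_le_map_algebraMap_of_toZMod_eq_zero w hw₀ hwp ?_
    rw [← MonoidAlgebra.coeff_mapRingHom, hρ]
    rfl
  have hmain :
      ((k * (Nat.totient (p ^ n) : ℚ)⁻¹ : ℚ) : WithTop ℚ) ≤ w (χ' (T ^ k * U)) := by
    rw [map_mul, w.map_mul, map_pow, w.map_pow, map_sub, map_one, MonoidAlgebra.lift_of,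
      w.map_sub_swap, w.map_one_sub_of_isPrimitiveRoot_prime_pow hn hχ hwp, ← WithTop.coe_nsmul,
      nsmul_eq_mul]
    exact le_add_of_nonneg_right (w.le_map_lift hχσ fun σ => hw₀ _)
  have hle1 : ((k * (Nat.totient (p ^ n) : ℚ)⁻¹ : ℚ) : WithTop ℚ) ≤ 1 := by
    rw [← WithTop.coe_one, WithTop.coe_le_coe, ← div_eq_mul_inv]
    exact div_le_one_of_le₀ (by exact_mod_cast hk) (Nat.cast_nonneg _)
  simpa using w.map_le_add hmain (hle1.trans hrest)

lemma map_lift_eq_of_red_mem_augIdeal_pow (hn : n ≠ 0) (hγ : ∀ x, x ∈ Submonoid.powers γ)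
    (hχ : IsPrimitiveRoot (χ γ) (p ^ n))
    (hw₀ : ∀ c : ℤ_[p], 0 ≤ w (algebraMap ℤ_[p] K c)) (hwp : w p = 1) {l : ℕ}
    (hl : l < Nat.totient (p ^ n)) {f : Lam p n}
    (hf : red p n f ∈ augIdeal p n ^ l ∧ red p n f ∉ augIdeal p n ^ (l + 1)) :
    w (MonoidAlgebra.lift ℤ_[p] K (Gn p n) χ f) =
      ((l * (Nat.totient (p ^ n) : ℚ)⁻¹ : ℚ) : WithTop ℚ) := by
  set ρ := MonoidAlgebra.mapRingHom (Gn p n) (PadicInt.toZMod (p := p))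
  set t := MonoidAlgebra.of (ZMod p) (Gn p n) γ - 1
  set T := MonoidAlgebra.of ℤ_[p] (Gn p n) γ - 1
  set ε := MonoidAlgebra.lift (ZMod p) (ZMod p) (Gn p n) 1
  set χ' := MonoidAlgebra.lift ℤ_[p] K (Gn p n) χ
  have hρT : ρ T = t := by simp [ρ, T, t]
  obtain ⟨hfl, hfl1⟩ := hf
  simp only [augIdeal_eq_span hγ, Ideal.span_singleton_pow, Ideal.mem_span_singleton,
    red_eq_mapRingHom] at hfl hfl1
  obtain ⟨u, hu⟩ := hfl
  have hεu : ε u ≠ 0 := by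
    intro h
    have htu := MonoidAlgebra.of_sub_one_dvd_sub_algebraMap_lift_one hγ u
    rw [h, map_zero, sub_zero] at htu
    obtain ⟨u', rfl⟩ := htu
    exact hfl1 ⟨u', by rw [hu, pow_succ, mul_assoc]⟩
  obtain ⟨a, ha⟩ := ZMod.ringHom_surjective (PadicInt.toZMod (p := p)) (ε u)
  have hwa : w (algebraMap ℤ_[p] K a) = 0 := by
    refine w.map_algebraMap_eq_zero_of_isUnit hw₀
      (IsLocalRing.notMem_maximalIdeal.mp fun hmem => hεu ?_)
    rw [← ha, ← RingHom.mem_ker, PadicInt.ker_toZMod]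
    exact hmem
  set x := T ^ l * algebraMap ℤ_[p] (Lam p n) a
  have hρx : red p n (f - x) ∈ augIdeal p n ^ (l + 1) := by
    rw [augIdeal_eq_span hγ, Ideal.span_singleton_pow, Ideal.mem_span_singleton,
      red_eq_mapRingHom]
    obtain ⟨v, hv⟩ := MonoidAlgebra.of_sub_one_dvd_sub_algebraMap_lift_one hγ u
    refine ⟨v, ?_⟩
    have : ρ (algebraMap ℤ_[p] (Lam p n) a) = algebraMap (ZMod p) _ (ε u) := by
      rw [← ha]
      exact congrArg (fun ψ : ℤ_[p] →+* _ => ψ a) (MonoidAlgebra.mapRingHom_comp_algebraMap _)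
    rw [map_sub, map_mul, map_pow, hρT, this, hu, ← mul_sub, hv, pow_succ, mul_assoc]
  have hwx : w (χ' x) = ((l * (Nat.totient (p ^ n) : ℚ)⁻¹ : ℚ) : WithTop ℚ) := by
    rw [map_mul, w.map_mul, map_pow, w.map_pow, map_sub, map_one, MonoidAlgebra.lift_of,
      w.map_sub_swap, w.map_one_sub_of_isPrimitiveRoot_prime_pow hn hχ hwp, AlgHom.commutes,
      hwa, add_zero, ← WithTop.coe_nsmul, nsmul_eq_mul]
  have hrest := le_map_lift_of_red_mem_augIdeal_pow w hn hγ hχ hw₀ hwp hl hρx (χ := χ)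
  have hlt : w (χ' x) < w (χ' (f - x)) := by
    refine hwx ▸ lt_of_lt_of_le ?_ hrest
    rw [WithTop.coe_lt_coe]
    push_cast
    exact mul_lt_mul_of_pos_right (lt_add_one _)
      (inv_pos.mpr (Nat.cast_pos.mpr (Nat.totient_pos.mpr (pow_pos (Fact.out : p.Prime).pos n))))
  rw [← add_sub_cancel x f, map_add, w.map_add_eq_of_lt_left hlt, hwx]

end Iwasawa

theorem stmt8_general (p : ℕ) [Fact p.Prime] (n : ℕ) (hn : 1 ≤ n)
    (K : Type) [Field K] [Algebra ℤ_[p] K] (v : K → ℚ)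
    (hv_mul : ∀ x y : K, x ≠ 0 → y ≠ 0 → v (x * y) = v x + v y)
    (hv_add : ∀ x y : K, x ≠ 0 → y ≠ 0 → x + y ≠ 0 → min (v x) (v y) ≤ v (x + y))
    (hv_coe : ∀ c : ℤ_[p], c ≠ 0 → v (algebraMap ℤ_[p] K c) = (c.valuation : ℚ))
    (γ : Gn p n) (hγ : ∀ x : Gn p n, x ∈ Subgroup.zpowers γ)
    (χ : Gn p n →* K) (hχ : IsPrimitiveRoot (χ γ) (p ^ n))
    (f : Lam p n) (m l : ℕ)
    (f' : Lam p n) (hf' : f = (p : Lam p n) ^ m * f')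
    (hl : red p n f' ∈ (augIdeal p n) ^ l ∧ red p n f' ∉ (augIdeal p n) ^ (l+1))
    (hlt : l < p ^ (n-1) * (p - 1)) :
    v ((MonoidAlgebra.lift ℤ_[p] K (Gn p n)) χ f) =
      (m : ℚ) + (l : ℚ) / ((p : ℚ) ^ (n-1) * ((p : ℚ) - 1)) := by
  have hp : p.Prime := Fact.out
  have htot : Nat.totient (p ^ n) = p ^ (n - 1) * (p - 1) := Nat.totient_prime_pow hp hn
  have hp0 : (p : K) ≠ 0 := fun h =>
    hχ.neZero'.out (by rw [Nat.cast_pow, h, zero_pow (by omega)])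
  set w := AddValuation.ofNeZero v hv_mul hv_add
  have hwp : w p = 1 := AddValuation.ofNeZero_natCast_eq_one hv_coe hp0
  have hwf' := map_lift_eq_of_red_mem_augIdeal_pow w (by omega)
    (fun x => mem_powers_iff_mem_zpowers.mpr (hγ x)) hχ
    (AddValuation.ofNeZero_algebraMap_nonneg hv_coe) hwp (htot ▸ hlt) hl
  have hwf : w (MonoidAlgebra.lift ℤ_[p] K (Gn p n) χ f) =
      ((m + l * (Nat.totient (p ^ n) : ℚ)⁻¹ : ℚ) : WithTop ℚ) := by
    rw [hf', map_mul, map_pow, map_natCast, w.map_mul, w.map_pow, hwp, hwf', WithTop.coe_add,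
      ← WithTop.coe_one, ← WithTop.coe_nsmul, nsmul_one]
  have hne : MonoidAlgebra.lift ℤ_[p] K (Gn p n) χ f ≠ 0 :=
    w.ne_top_iff.mp (hwf ▸ WithTop.coe_ne_top)
  rw [AddValuation.ofNeZero_apply hne, WithTop.coe_inj] at hwf
  rw [hwf, htot, div_eq_mul_inv]
  push_cast [Nat.cast_sub hp.one_le]
  rfl

/-- Evaluation at a character `χ` of exact order `p^n`: if `λ(f) < p^{n-1}(p-1)`
then `ord_p(χ(f)) = μ(f) + λ(f)/(p^{n-1}(p-1))`. Here `K` is a field extension of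
`ℤ_p` with a valuation `v` extending the `p`-adic valuation. -/
theorem stmt8 (p : ℕ) [Fact p.Prime] (n : ℕ) (hn : 1 ≤ n)
    (K : Type) [Field K] [Algebra ℤ_[p] K] (v : K → ℚ)
    (hv_mul : ∀ x y : K, x ≠ 0 → y ≠ 0 → v (x * y) = v x + v y)
    (hv_add : ∀ x y : K, x ≠ 0 → y ≠ 0 → x + y ≠ 0 → min (v x) (v y) ≤ v (x + y))
    (hv_coe : ∀ c : ℤ_[p], c ≠ 0 → v (algebraMap ℤ_[p] K c) = (c.valuation : ℚ))
    (γ : Gn p n) (hγ : ∀ x : Gn p n, x ∈ Subgroup.zpowers γ)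
    (χ : Gn p n →* K) (hχ : IsPrimitiveRoot (χ γ) (p ^ n))
    (f : Lam p n) (m l : ℕ)
    (hm : (p : Lam p n) ^ m ∣ f ∧ ¬ (p : Lam p n) ^ (m+1) ∣ f)
    (f' : Lam p n) (hf' : f = (p : Lam p n) ^ m * f')
    (hl : red p n f' ∈ (augIdeal p n) ^ l ∧ red p n f' ∉ (augIdeal p n) ^ (l+1))
    (hlt : l < p ^ (n-1) * (p - 1)) :
    v ((MonoidAlgebra.lift ℤ_[p] K (Gn p n)) χ f) =
      (m : ℚ) + (l : ℚ) / ((p : ℚ) ^ (n-1) * ((p : ℚ) - 1)) :=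
  stmt8_general p n hn K v hv_mul hv_add hv_coe γ hγ χ hχ f m l f' hf' hl hlt
end

section
/- Let π: Λ_n → Λ_{n-1} be the natural projection. For nonzero g ∈ Λ_n with μ(π(g)) = μ(g), one has λ(π(g)) = λ(g). -/
open MonoidAlgebra Finset

/-!
Reduction mod `p` commutes with `π`, and `μ(π(g)) = μ(g)` says that `π(g')` is not divisible by
`p`, i.e. that its reduction is nonzero. Over `𝔽_p` the augmentation ideal `I` of `𝔽_p[G_{n+1}]`
is generated by `γ - 1`, and the reduced projection is a surjection mapping `I` onto the
augmentation ideal of `𝔽_p[G_n]`, with kernel `((γ - 1)^{p^n}) = I^{p^n}` because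
`(γ - 1)^{p^n} = γ^{p^n} - 1`. A surjection `φ` with kernel `I^N` maps `I^l \ I^{l+1}` into
`(φ I)^l \ (φ I)^{l+1}` as long as the image is nonzero: that forces `l < N`, and then the kernel
lies in `I^{l+1}`.
-/

open MonoidAlgebra

namespace MonoidAlgebra

variable {k G H : Type*} [CommRing k]

theorem ker_lift_one_le [Monoid G] {I : Ideal (MonoidAlgebra k G)}
    (hI : ∀ g, of k G g - 1 ∈ I) : RingHom.ker (lift k k G 1).toRingHom ≤ I := by
  intro x hx
  have key : ∀ y : MonoidAlgebra k G, y - algebraMap k _ (lift k k G 1 y) ∈ I := by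
    intro y
    induction y using induction_linear with
    | zero => simp
    | add y z hy hz => rw [map_add, map_add, add_sub_add_comm]; exact add_mem hy hz
    | single g r =>
      have : single g r - algebraMap k _ (lift k k G 1 (single g r)) =
          algebraMap k _ r * (of k G g - 1) := by
        simp [mul_sub, coe_algebraMap, lift_single, single_mul_single]
      exact this ▸ I.mul_mem_left _ (hI g)
  have hx0 : lift k k G 1 x = 0 := RingHom.mem_ker.mp hx
  simpa [hx0] using key x

/-- With `s` a set-theoretic section of `f`, each `x - s_* (f_* x)` is a combination of the
`of g - 1` with `g ∈ f.ker`. -/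
theorem ker_mapDomainRingHom_le [Group G] [Group H] {f : G →* H} (hf : Function.Surjective f)
    {I : Ideal (MonoidAlgebra k G)} (hI : ∀ g ∈ f.ker, of k G g - 1 ∈ I) :
    RingHom.ker (mapDomainRingHom k f) ≤ I := by
  intro x hx
  obtain ⟨s, hs⟩ := hf.hasRightInverse
  have key : ∀ y : MonoidAlgebra k G, y - mapDomain s (mapDomainRingHom k f y) ∈ I := by
    intro y
    induction y using induction_linear with
    | zero => simp [mapDomain_zero]
    | add y z hy hz => rw [map_add, mapDomain_add, add_sub_add_comm]; exact add_mem hy hz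
    | single g r =>
      have hker : (s (f g))⁻¹ * g ∈ f.ker := by simp [hs (f g)]
      have : single g r - single (s (f g)) r =
          single (s (f g)) r * (of k G ((s (f g))⁻¹ * g) - 1) := by
        rw [mul_sub, mul_one, of_apply, single_mul_single, mul_one, mul_inv_cancel_left]
      simpa [mapDomain_single, this] using I.mul_mem_left _ (hI _ hker)
  simpa [RingHom.mem_ker.mp hx, mapDomain_zero] using key x

theorem mapDomain_surjective {M N : Type*} {f : M → N} (hf : Function.Surjective f) :
    Function.Surjective (mapDomain (R := k) f) := fun y => by
  obtain ⟨x, hx⟩ := Finsupp.mapDomain_surjective hf y.coeff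
  exact ⟨ofCoeff x, congrArg ofCoeff hx⟩

theorem algebraMap_dvd_of_forall_dvd_coeff [CommMonoid G] {r : k} {x : MonoidAlgebra k G}
    (h : ∀ g, r ∣ x.coeff g) : algebraMap k _ r ∣ x := by
  rw [← sum_coeff_single x]
  refine Finset.dvd_sum fun g _ => ?_
  obtain ⟨c, hc⟩ := h g
  exact ⟨single g c, by simp [hc, coe_algebraMap, single_mul_single]⟩

end MonoidAlgebra

theorem Ideal.mem_map_pow_and_notMem_map_pow_succ {A B : Type*} [CommRing A] [CommRing B]
    {φ : A →+* B} (hφ : Function.Surjective φ) {I : Ideal A} {N l : ℕ}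
    (hker : RingHom.ker φ = I ^ N) {x : A} (hl : x ∈ I ^ l) (hl' : x ∉ I ^ (l + 1))
    (hx : φ x ≠ 0) : φ x ∈ I.map φ ^ l ∧ φ x ∉ I.map φ ^ (l + 1) := by
  rw [← Ideal.map_pow, ← Ideal.map_pow]
  refine ⟨Ideal.mem_map_of_mem φ hl, fun h => hl' ?_⟩
  have hlN : l + 1 ≤ N := by
    by_contra! hN
    exact hx (RingHom.mem_ker.mp (hker ▸ Ideal.pow_le_pow_right (by omega) hl))
  have : x ∈ I ^ (l + 1) ⊔ RingHom.ker φ := by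
    rw [RingHom.ker_eq_comap_bot, ← Ideal.comap_map_of_surjective φ hφ]
    exact h
  rwa [hker, sup_eq_left.mpr (Ideal.pow_le_pow_right hlN)] at this

instance (k G : Type*) [CommRing k] [Monoid G] (p : ℕ) [CharP k p] : CharP (MonoidAlgebra k G) p :=
  charP_of_injective_algebraMap (R := k) (fun a b h => by simpa [coe_algebraMap] using h) p

theorem ofAdd_one_pow_val {m : ℕ} [NeZero m] (a : Multiplicative (ZMod m)) :
    Multiplicative.ofAdd (1 : ZMod m) ^ (Multiplicative.toAdd a).val = a := by
  rw [← ofAdd_nsmul, nsmul_one, ZMod.natCast_zmod_val, ofAdd_toAdd]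

theorem projHom_surjective (p n : ℕ) : Function.Surjective (projHom p n) :=
  ZMod.castHom_surjective (pow_dvd_pow p n.le_succ)

section Cyclic

variable (p : ℕ) [Fact p.Prime]

noncomputable def gamma (k : ℕ) : MonoidAlgebra (ZMod p) (Gn p k) :=
  of (ZMod p) (Gn p k) (Multiplicative.ofAdd 1)

theorem of_sub_one_mem_span_gamma_sub_one {k : ℕ} (a : Gn p k) :
    of (ZMod p) (Gn p k) a - 1 ∈ Ideal.span {gamma p k - 1} := by
  rw [← ofAdd_one_pow_val a, map_pow]
  exact Ideal.mem_span_singleton.mpr (sub_one_dvd_pow_sub_one _ _)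

theorem augIdeal_eq_span_s10 (k : ℕ) : augIdeal p k = Ideal.span {gamma p k - 1} := by
  refine le_antisymm (ker_lift_one_le (of_sub_one_mem_span_gamma_sub_one p)) ?_
  rw [Ideal.span_le, Set.singleton_subset_iff]
  simp [augIdeal, gamma, RingHom.mem_ker]

theorem gamma_pow_card (k : ℕ) : gamma p k ^ p ^ k = 1 := by
  rw [gamma, ← map_pow, ← ofAdd_nsmul, nsmul_one, ZMod.natCast_self, ofAdd_zero, map_one]

theorem mapDomain_gamma (n : ℕ) :
    mapDomainRingHom (ZMod p) (projHom p n) (gamma p (n + 1)) = gamma p n := by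
  simp [gamma, projHom, ZMod.cast_one (pow_dvd_pow p n.le_succ)]

theorem map_augIdeal (n : ℕ) :
    (augIdeal p (n + 1)).map (mapDomainRingHom (ZMod p) (projHom p n)) = augIdeal p n := by
  rw [augIdeal_eq_span_s10, augIdeal_eq_span_s10, Ideal.map_span, Set.image_singleton, map_sub, map_one,
    mapDomain_gamma]

theorem pow_dvd_val_of_mem_ker_projHom {n : ℕ} {a : Gn p (n + 1)} (ha : a ∈ (projHom p n).ker) :
    p ^ n ∣ (Multiplicative.toAdd a).val := by
  have h : ZMod.castHom (pow_dvd_pow p n.le_succ) (ZMod (p ^ n)) (Multiplicative.toAdd a) = 0 :=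
    congrArg Multiplicative.toAdd ((projHom p n).mem_ker.mp ha)
  rwa [ZMod.castHom_apply, ZMod.cast_eq_val, ZMod.natCast_eq_zero_iff] at h

theorem ker_mapDomain_projHom (n : ℕ) :
    RingHom.ker (mapDomainRingHom (ZMod p) (projHom p n)) = augIdeal p (n + 1) ^ p ^ n := by
  rw [augIdeal_eq_span_s10, Ideal.span_singleton_pow, sub_pow_char_pow, one_pow]
  refine le_antisymm (ker_mapDomainRingHom_le (projHom_surjective p n) fun a ha => ?_) ?_
  · obtain ⟨j, hj⟩ := pow_dvd_val_of_mem_ker_projHom p ha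
    rw [← ofAdd_one_pow_val a, hj, pow_mul, map_pow, map_pow]
    exact Ideal.mem_span_singleton.mpr (sub_one_dvd_pow_sub_one _ _)
  · rw [Ideal.span_le, Set.singleton_subset_iff, SetLike.mem_coe, RingHom.mem_ker, map_sub,
      map_pow, mapDomain_gamma, gamma_pow_card, map_one, sub_self]

theorem red_piMap (n : ℕ) (f : Lam p (n + 1)) :
    red p n (piMap p n f) = mapDomainRingHom (ZMod p) (projHom p n) (red p (n + 1) f) :=
  RingHom.congr_fun (mapRingHom_comp_mapDomainRingHom PadicInt.toZMod (projHom p n)) f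

theorem p_dvd_of_red_eq_zero {k : ℕ} {f : Lam p k} (hf : red p k f = 0) : (p : Lam p k) ∣ f := by
  rw [← map_natCast (algebraMap ℤ_[p] (Lam p k))]
  refine algebraMap_dvd_of_forall_dvd_coeff fun a => ?_
  have : PadicInt.toZMod (f.coeff a) = 0 := congrArg (fun x => x.coeff a) hf
  rwa [← RingHom.mem_ker, PadicInt.ker_toZMod, PadicInt.maximalIdeal_eq_span_p,
    Ideal.mem_span_singleton] at this

end Cyclic

theorem stmt10_general (p : ℕ) [Fact p.Prime] (n : ℕ) (g : Lam p (n+1))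
    (m l : ℕ)
    (hm' : (p : Lam p n) ^ m ∣ piMap p n g ∧ ¬ (p : Lam p n) ^ (m+1) ∣ piMap p n g)
    (g' : Lam p (n+1)) (hg' : g = (p : Lam p (n+1)) ^ m * g')
    (hl : red p (n+1) g' ∈ (augIdeal p (n+1)) ^ l ∧
      red p (n+1) g' ∉ (augIdeal p (n+1)) ^ (l+1)) :
    red p n (piMap p n g') ∈ (augIdeal p n) ^ l ∧
      red p n (piMap p n g') ∉ (augIdeal p n) ^ (l+1) := by
  have hndvd : ¬ (p : Lam p n) ∣ piMap p n g' := fun ⟨w, hw⟩ =>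
    hm'.2 ⟨w, by rw [hg', map_mul, map_pow, map_natCast, hw, ← mul_assoc, ← pow_succ]⟩
  have hred : red p n (piMap p n g') ≠ 0 := mt (p_dvd_of_red_eq_zero p) hndvd
  rw [red_piMap] at hred ⊢
  rw [← map_augIdeal]
  exact Ideal.mem_map_pow_and_notMem_map_pow_succ (mapDomain_surjective (projHom_surjective p n))
    (ker_mapDomain_projHom p n) hl.1 hl.2 hred

/-- If `μ(π(g)) = μ(g)` then `λ(π(g)) = λ(g)`. -/
theorem stmt10 (p : ℕ) [Fact p.Prime] (n : ℕ) (g : Lam p (n+1)) (hg : g ≠ 0)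
    (m l : ℕ)
    (hm : (p : Lam p (n+1)) ^ m ∣ g ∧ ¬ (p : Lam p (n+1)) ^ (m+1) ∣ g)
    (hm' : (p : Lam p n) ^ m ∣ piMap p n g ∧ ¬ (p : Lam p n) ^ (m+1) ∣ piMap p n g)
    (g' : Lam p (n+1)) (hg' : g = (p : Lam p (n+1)) ^ m * g')
    (hl : red p (n+1) g' ∈ (augIdeal p (n+1)) ^ l ∧
      red p (n+1) g' ∉ (augIdeal p (n+1)) ^ (l+1)) :
    red p n (piMap p n g') ∈ (augIdeal p n) ^ l ∧
      red p n (piMap p n g') ∉ (augIdeal p n) ^ (l+1) :=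
  stmt10_general p n g m l hm' g' hg' hl
end
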